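/- Let D be a bounded proper subdomain of ℝⁿ, n ≥ 2. Then for all x, y ∈ D, m_D(x, y) ≥ log[ (δ_D(y)·(d(D) − δ_D(y))) / (δ_D(x)·(d(D) − δ_D(x))) ]. -/

import Mathlib

open Metric Set

variable {E : Type*} [NormedAddCommGroup E] [NormedSpace ℝ E]

/-- δ_D(z): the Euclidean distance from `z` to the boundary `∂D`. -/
noncomputable def bdist (D : Set E) (z : E) : ℝ := Metric.infDist z (frontier D)

/-- The m-density `m_D(z) = d(D) / (δ_D(z)·(d(D) − δ_D(z)))`. -/
noncomputable def mDensity (D : Set E) (z : E) : ℝ :=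
  Metric.diam D / (bdist D z * (Metric.diam D - bdist D z))

/-- A rectifiable path in `D` from `x` to `y`, modeled as a Lipschitz map on `[0,1]`. -/
def IsRectPathIn (D : Set E) (x y : E) (γ : ℝ → E) : Prop :=
  (∃ K : NNReal, LipschitzWith K γ) ∧ γ 0 = x ∧ γ 1 = y ∧ ∀ t ∈ Set.Icc (0:ℝ) 1, γ t ∈ D

/-- The line integral `∫_γ ρ(z) |dz|` of a density `ρ` along a path `γ`. -/
noncomputable def pathIntegral (ρ : E → ℝ) (γ : ℝ → E) : ℝ :=
  ∫ t in (0:ℝ)..1, ρ (γ t) * ‖deriv γ t‖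

/-- `inf_γ ∫_γ ρ(z)|dz|` over all rectifiable paths `γ` joining `x` and `y` in `D`. -/
noncomputable def pathDist (ρ : E → ℝ) (D : Set E) (x y : E) : ℝ :=
  sInf (pathIntegral ρ '' {γ | IsRectPathIn D x y γ})

/-- The metric `m_D`. -/
noncomputable def mDist (D : Set E) (x y : E) : ℝ := pathDist (mDensity D) D x y

/-- The quasihyperbolic metric `k_D`. -/
noncomputable def kDist (D : Set E) (x y : E) : ℝ :=
  pathDist (fun z => 1 / bdist D z) D x y

/-!
Along a Lipschitz path `γ` in `D`, the function `u = δ_D ∘ γ` is `1`-Lipschitz with respect to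
arc length and satisfies `0 < u ≤ d(D)/2`. As `u` attains a positive minimum on `[0, 1]`,
`log (u (d - u))` is Lipschitz there, hence absolutely continuous, with derivative
`(1/u - 1/(d - u)) u'` of absolute value at most `(1/u + 1/(d - u)) ‖γ'‖ = m_D(γ) ‖γ'‖`.
Integrating bounds the `m_D`-length of every path from below, hence also the infimum, which is
taken over a nonempty set because an open connected set is joined by polygonal paths.
-/

open MeasureTheory NNReal

section Geometry

variable {D : Set E} {z : E}

lemma bdist_pos (hD : IsOpen D) (hD' : D ≠ univ) (hz : z ∈ D) : 0 < bdist D z := by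
  have hne : (frontier D).Nonempty := nonempty_frontier_iff.mpr ⟨⟨z, hz⟩, hD'⟩
  refine (isClosed_frontier.notMem_iff_infDist_pos hne).1 fun h => ?_
  exact h.2 (hD.interior_eq.symm ▸ hz)

variable [FiniteDimensional ℝ E]

lemma bdist_le_infDist_compl (hD' : D ≠ univ) (hz : z ∈ D) : bdist D z ≤ infDist z Dᶜ := by
  obtain ⟨w, hw, hzw⟩ := exists_mem_frontier_infDist_compl_eq_dist hz hD'
  exact hzw ▸ infDist_le_dist_of_mem hw

lemma ball_bdist_subset (hD' : D ≠ univ) (hz : z ∈ D) : ball z (bdist D z) ⊆ D :=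
  (ball_subset_ball (bdist_le_infDist_compl hD' hz)).trans ball_infDist_compl_subset

lemma two_mul_bdist_le_diam (hD : Bornology.IsBounded D) (hD' : D ≠ univ) (hz : z ∈ D) :
    2 * bdist D z ≤ diam D := by
  obtain ⟨w, hw⟩ := (nonempty_compl.2 hD')
  have : Nontrivial E := nontrivial_of_ne z w fun h => hw (h ▸ hz)
  calc 2 * bdist D z = diam (ball z (bdist D z)) := (diam_ball_eq z infDist_nonneg).symm
    _ ≤ diam D := diam_mono (ball_bdist_subset hD' hz) hD

end Geometry

section Paths

variable {D : Set E} {x y z : E} {γ η : ℝ → E}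

lemma isRectPathIn_lineMap (h : segment ℝ x y ⊆ D) :
    IsRectPathIn D x y (AffineMap.lineMap x y) := by
  refine ⟨⟨_, lipschitzWith_lineMap x y⟩, AffineMap.lineMap_apply_zero x y,
    AffineMap.lineMap_apply_one x y, fun t ht => h ?_⟩
  rw [segment_eq_image_lineMap]
  exact mem_image_of_mem _ ht

omit [NormedSpace ℝ E] in
/-- On `[0, 1/2]` the second summand vanishes since `η 0 = y`, and on `[1/2, 1]` the first one
is `γ 1 = y`: this is the concatenation of `γ` and `η`, written as a sum of Lipschitz maps. -/
lemma IsRectPathIn.trans (hγ : IsRectPathIn D x y γ) (hη : IsRectPathIn D y z η) :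
    IsRectPathIn D x z (fun t => γ (min (2 * t) 1) + (η (max (2 * t - 1) 0) - y)) := by
  obtain ⟨⟨K, hK⟩, hγ0, hγ1, hγD⟩ := hγ
  obtain ⟨⟨L, hL⟩, hη0, hη1, hηD⟩ := hη
  have h2 : LipschitzWith 2 fun t : ℝ => 2 * t :=
    .of_dist_le_mul fun a b => by simp [Real.dist_eq, ← mul_sub, abs_mul]
  refine ⟨⟨_, (hK.comp (h2.min_const 1)).add
      ((hL.comp ((h2.sub (.const 1)).max_const 0)).sub (.const y))⟩,
    by simp [hγ0, hη0], by norm_num [hγ1, hη1], fun t ht => ?_⟩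
  dsimp only
  rcases le_total t (1 / 2) with h | h
  · rw [min_eq_left (by linarith), max_eq_right (by linarith), hη0, sub_self, add_zero]
    exact hγD _ ⟨by linarith [ht.1], by linarith⟩
  · rw [min_eq_right (by linarith), max_eq_left (by linarith), hγ1, add_sub_cancel]
    exact hηD _ ⟨by linarith, by linarith [ht.2]⟩

lemma exists_isRectPathIn (hD : IsOpen D) (hD' : IsPreconnected D) (hx : x ∈ D) (hy : y ∈ D) :
    ∃ γ, IsRectPathIn D x y γ := by
  refine hD'.induction₂' (fun a b => ∃ γ, IsRectPathIn D a b γ) (fun a ha => ?_)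
    (fun a b c _ _ _ ⟨γ, hγ⟩ ⟨η, hη⟩ => ⟨_, hγ.trans hη⟩) hx hy
  obtain ⟨r, hr, hrD⟩ := Metric.isOpen_iff.1 hD a ha
  filter_upwards [nhdsWithin_le_nhds (ball_mem_nhds a hr)] with b hb
  have hab := (convex_ball a r).segment_subset (mem_ball_self hr) hb
  have hba := (convex_ball a r).segment_subset hb (mem_ball_self hr)
  exact ⟨⟨_, isRectPathIn_lineMap (hab.trans hrD)⟩, ⟨_, isRectPathIn_lineMap (hba.trans hrD)⟩⟩

end Paths

section Calculus

lemma norm_le_norm_of_hasDerivAt_of_dist_le {F : Type*} [NormedAddCommGroup F] [NormedSpace ℝ F]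
    {u : ℝ → F} {γ : ℝ → E} {t : ℝ} {u' : F} {γ' : E} (hu : HasDerivAt u u' t)
    (hγ : HasDerivAt γ γ' t) (h : ∀ s, dist (u s) (u t) ≤ dist (γ s) (γ t)) : ‖u'‖ ≤ ‖γ'‖ := by
  rw [hasDerivAt_iff_tendsto_slope] at hu hγ
  refine le_of_tendsto_of_tendsto' hu.norm hγ.norm fun s => ?_
  simp only [slope, vsub_eq_sub, norm_smul, ← dist_eq_norm]
  exact mul_le_mul_of_nonneg_left (h s) (norm_nonneg _)

variable [FiniteDimensional ℝ E]

theorem sub_le_integral_mul_norm_deriv {γ : ℝ → E} {K : ℝ≥0} (hγ : LipschitzWith K γ)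
    {u φ φ' ρ : ℝ → ℝ} {a b : ℝ} (hu : ∀ s t, dist (u s) (u t) ≤ dist (γ s) (γ t))
    (hu_mem : MapsTo u (Icc 0 1) (Icc a b)) (hφ : ∀ s ∈ Icc a b, HasDerivAt φ (φ' s) s)
    (hρ : ContinuousOn ρ (Icc a b)) (hφρ : ∀ s ∈ Icc a b, |φ' s| ≤ ρ s) :
    φ (u 1) - φ (u 0) ≤ ∫ t in (0:ℝ)..1, ρ (u t) * ‖deriv γ t‖ := by
  have hu_lip : LipschitzWith K u := .of_dist_le_mul fun s t => (hu s t).trans (hγ.dist_le_mul s t)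
  obtain ⟨C, hC⟩ := isCompact_Icc.exists_bound_of_continuousOn hρ
  have hφ_lip : LipschitzOnWith (Real.toNNReal C) φ (Icc a b) :=
    (convex_Icc a b).lipschitzOnWith_of_nnnorm_hasDerivWithin_le
      (fun s hs => (hφ s hs).hasDerivWithinAt) fun s hs => by
        rw [← NNReal.coe_le_coe, coe_nnnorm, Real.coe_toNNReal']
        exact le_max_of_le_left ((hφρ s hs).trans ((le_abs_self _).trans (hC s hs)))
  have hac : AbsolutelyContinuousOnInterval (fun t => φ (u t)) 0 1 := by
    refine LipschitzOnWith.absolutelyContinuousOnInterval (K := C.toNNReal * K) ?_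
    rw [uIcc_of_le zero_le_one]
    exact hφ_lip.comp hu_lip.lipschitzOnWith hu_mem
  have hderiv : ∀ᵐ t, t ∈ Icc (0:ℝ) 1 → deriv (fun t => φ (u t)) t ≤ ρ (u t) * ‖deriv γ t‖ := by
    filter_upwards [hγ.ae_differentiableAt_real, hu_lip.ae_differentiableAt_real] with t hγt hut ht
    have hφu : HasDerivAt (fun t => φ (u t)) (φ' (u t) * deriv u t) t :=
      (hφ _ (hu_mem ht)).comp t hut.hasDerivAt
    rw [hφu.deriv]
    calc φ' (u t) * deriv u t ≤ |φ' (u t)| * |deriv u t| := by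
          rw [← abs_mul]; exact le_abs_self _
      _ ≤ ρ (u t) * ‖deriv γ t‖ := by
          refine mul_le_mul (hφρ _ (hu_mem ht)) ?_ (abs_nonneg _)
            ((abs_nonneg _).trans (hφρ _ (hu_mem ht)))
          exact norm_le_norm_of_hasDerivAt_of_dist_le hut.hasDerivAt hγt.hasDerivAt (hu · t)
  have hint : IntervalIntegrable (fun t => ρ (u t) * ‖deriv γ t‖) volume 0 1 := by
    refine IntervalIntegrable.continuousOn_mul ?_ ?_
    · refine intervalIntegrable_const (c := (K : ℝ)).mono_fun'
        (stronglyMeasurable_deriv γ).norm.aestronglyMeasurable (ae_of_all _ fun t => ?_)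
      simpa using norm_deriv_le_of_lipschitz hγ
    · rw [uIcc_of_le zero_le_one]
      exact hρ.comp hu_lip.continuous.continuousOn hu_mem
  rw [← hac.integral_deriv_eq_sub]
  exact intervalIntegral.integral_mono_ae_restrict zero_le_one hac.intervalIntegrable_deriv hint
    ((ae_restrict_iff' measurableSet_Icc).2 hderiv)

end Calculus

lemma hasDerivAt_log_mul_sub {d s : ℝ} (hs : 0 < s) (hsd : s < d) :
    HasDerivAt (fun s => Real.log (s * (d - s))) ((d - 2 * s) / (s * (d - s))) s := by
  have h := ((hasDerivAt_id' s).fun_mul ((hasDerivAt_const s d).fun_sub (hasDerivAt_id' s))).log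
    (mul_pos hs (sub_pos.2 hsd)).ne'
  convert h using 1
  ring

lemma abs_sub_two_mul_div_le {d s : ℝ} (hs : 0 < s) (hsd : s < d) :
    |(d - 2 * s) / (s * (d - s))| ≤ d / (s * (d - s)) := by
  have hden : 0 < s * (d - s) := mul_pos hs (sub_pos.2 hsd)
  rw [abs_div, abs_of_pos hden]
  exact div_le_div_of_nonneg_right (abs_le.2 ⟨by linarith, by linarith⟩) hden.le

theorem log_le_pathIntegral_mDensity [FiniteDimensional ℝ E] {D : Set E} (hD : IsOpen D)
    (hDb : Bornology.IsBounded D) (hD' : D ≠ univ) {x y : E} {γ : ℝ → E}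
    (hγ : IsRectPathIn D x y γ) :
    Real.log ((bdist D y * (diam D - bdist D y)) / (bdist D x * (diam D - bdist D x)))
      ≤ pathIntegral (mDensity D) γ := by
  obtain ⟨⟨K, hK⟩, rfl, rfl, hγD⟩ := hγ
  set d := diam D
  set u : ℝ → ℝ := fun t => bdist D (γ t)
  have hu : ∀ s t, dist (u s) (u t) ≤ dist (γ s) (γ t) := fun s t => by
    simpa [u, bdist] using (lipschitz_infDist_pt (frontier D)).dist_le_mul (γ s) (γ t)
  obtain ⟨t₀, ht₀, hmin⟩ := isCompact_Icc.exists_isMinOn (nonempty_Icc.2 zero_le_one)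
    ((lipschitz_infDist_pt _).continuous.comp hK.continuous).continuousOn
  have hu_mem : MapsTo u (Icc 0 1) (Icc (u t₀) (d / 2)) := fun t ht =>
    ⟨hmin ht, by linarith [two_mul_bdist_le_diam hDb hD' (hγD t ht)]⟩
  have hbounds : ∀ s ∈ Icc (u t₀) (d / 2), 0 < s ∧ s < d := fun s hs => by
    have hc := bdist_pos hD hD' (hγD t₀ ht₀)
    exact ⟨by linarith [hs.1], by linarith [hs.1, hs.2]⟩
  have hden : ∀ s ∈ Icc (u t₀) (d / 2), s * (d - s) ≠ 0 := fun s hs =>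
    (mul_pos (hbounds s hs).1 (sub_pos.2 (hbounds s hs).2)).ne'
  rw [Real.log_div (hden _ (hu_mem (right_mem_Icc.2 zero_le_one)))
    (hden _ (hu_mem (left_mem_Icc.2 zero_le_one)))]
  exact sub_le_integral_mul_norm_deriv hK hu hu_mem
    (fun s hs => hasDerivAt_log_mul_sub (hbounds s hs).1 (hbounds s hs).2)
    (continuousOn_const.div (continuousOn_id.mul (continuousOn_const.sub continuousOn_id)) hden)
    fun s hs => abs_sub_two_mul_div_le (hbounds s hs).1 (hbounds s hs).2

theorem mDist_log_lower_bound_general {n : ℕ}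
    (D : Set (EuclideanSpace ℝ (Fin n)))
    (hDopen : IsOpen D) (hDconn : IsConnected D)
    (hDbdd : Bornology.IsBounded D) (hDproper : D ≠ Set.univ)
    (x y : EuclideanSpace ℝ (Fin n)) (hx : x ∈ D) (hy : y ∈ D) :
    Real.log ((bdist D y * (Metric.diam D - bdist D y)) /
        (bdist D x * (Metric.diam D - bdist D x)))
      ≤ mDist D x y := by
  obtain ⟨γ, hγ⟩ := exists_isRectPathIn hDopen hDconn.isPreconnected hx hy
  refine le_csInf ⟨_, γ, hγ, rfl⟩ ?_
  rintro _ ⟨γ, hγ, rfl⟩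
  exact log_le_pathIntegral_mDensity hDopen hDbdd hDproper hγ

/-- Corollary: logarithmic lower bound for the $m_D$-metric.
For a bounded proper subdomain $D ⊂ ℝ^n$, $n ≥ 2$, and all $x, y ∈ D$:
$m_D(x,y) ≥ \log[(δ_D(y)(d(D) − δ_D(y)))/(δ_D(x)(d(D) − δ_D(x)))]$. -/
theorem mDist_log_lower_bound {n : ℕ} (hn : 2 ≤ n)
    (D : Set (EuclideanSpace ℝ (Fin n)))
    (hDopen : IsOpen D) (hDconn : IsConnected D)
    (hDbdd : Bornology.IsBounded D) (hDproper : D ≠ Set.univ)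
    (x y : EuclideanSpace ℝ (Fin n)) (hx : x ∈ D) (hy : y ∈ D) :
    Real.log ((bdist D y * (Metric.diam D - bdist D y)) /
        (bdist D x * (Metric.diam D - bdist D x)))
      ≤ mDist D x y :=
  mDist_log_lower_bound_general D hDopen hDconn hDbdd hDproper x y hx hy
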